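/- arXiv:2403.08532 — 6 statements merged into one kernel-verified Lean document; each statement's English description precedes it below -/
import Mathlib

section
/- Let γ, β, τ₀, τ_ε, τ_S > 0, and for θ > -1 let a(θ) be the unique positive solution of γa = τ_ε/(τ_ε + τ₀ + β²a²(θ+1)²τ_S). Then the function a(θ) is strictly decreasing in θ. -/
/-!
Write `D(θ) = τε + τ₀ + β²a(θ)²(θ+1)²τS` for the denominator. The equilibrium equation says
`D(θ) = τε / (γ a(θ))`, so if `a` failed to decrease on some `x < y` we would get `D(y) ≤ D(x)`;
but with `a(x) ≤ a(y)` and `(x+1)² < (y+1)²` the formula for `D` makes `D(x) < D(y)`.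
-/

lemma eq_div_of_eq_div_of_ne_zero {K : Type*} [Field K] {x c d : K} (hx : x ≠ 0)
    (h : x = c / d) : d = c / x := by
  have hd : d ≠ 0 := by rintro rfl; simp_all
  rw [eq_div_iff hx, h, mul_div_cancel₀ c hd]

lemma mul_sq_mul_sq_mul_lt_of_le_of_lt {β τS a a' x y : ℝ} (hβ : β ≠ 0) (hτS : 0 < τS) (ha : 0 < a)
    (haa' : a ≤ a') (hx : -1 < x) (hxy : x < y) :
    β ^ 2 * a ^ 2 * (x + 1) ^ 2 * τS < β ^ 2 * a' ^ 2 * (y + 1) ^ 2 * τS := by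
  have hx1 : 0 < x + 1 := by linarith
  have ha' : 0 < a' := ha.trans_le haa'
  calc β ^ 2 * a ^ 2 * (x + 1) ^ 2 * τS ≤ β ^ 2 * a' ^ 2 * (x + 1) ^ 2 * τS := by gcongr
    _ < β ^ 2 * a' ^ 2 * (y + 1) ^ 2 * τS := by gcongr

theorem a_strictAnti_general
    (γ β τ₀ τε τS : ℝ)
    (hγ : 0 < γ) (hβ : 0 < β) (hτε : 0 < τε) (hτS : 0 < τS)
    (a : ℝ → ℝ)
    (ha : ∀ θ : ℝ, -1 < θ → 0 < a θ ∧
      γ * a θ = τε / (τε + τ₀ + β ^ 2 * (a θ) ^ 2 * (θ + 1) ^ 2 * τS)) :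
    StrictAntiOn a (Set.Ioi (-1 : ℝ)) := by
  intro x hx y hy hxy
  by_contra! hle
  have hdenom (θ : ℝ) (hθ : -1 < θ) :
      τε + τ₀ + β ^ 2 * (a θ) ^ 2 * (θ + 1) ^ 2 * τS = τε / (γ * a θ) :=
    eq_div_of_eq_div_of_ne_zero (mul_pos hγ (ha θ hθ).1).ne' (ha θ hθ).2
  have hax := (ha x hx).1
  have hdenom_le : τε / (γ * a y) ≤ τε / (γ * a x) := by gcongr
  have hdenom_lt := mul_sq_mul_sq_mul_lt_of_le_of_lt (τS := τS) hβ.ne' hτS hax hle hx hxy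
  rw [← hdenom x hx, ← hdenom y hy] at hdenom_le
  linarith

/-- The equilibrium coefficient a(θ), defined as the unique positive solution of
γa = τε/(τε + τ₀ + β²a²(θ+1)²τS), is strictly decreasing in θ on (-1, ∞). -/
theorem a_strictAnti
    (γ β τ₀ τε τS : ℝ)
    (hγ : 0 < γ) (hβ : 0 < β) (hτ₀ : 0 < τ₀) (hτε : 0 < τε) (hτS : 0 < τS)
    (a : ℝ → ℝ)
    (ha : ∀ θ : ℝ, -1 < θ → 0 < a θ ∧
      γ * a θ = τε / (τε + τ₀ + β ^ 2 * (a θ) ^ 2 * (θ + 1) ^ 2 * τS)) :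
    StrictAntiOn a (Set.Ioi (-1 : ℝ)) :=
  a_strictAnti_general γ β τ₀ τε τS hγ hβ hτε hτS a ha
end

section
/- Let γ, β, τ₀, τ_ε, τ_S > 0, and for θ > -1 let a(θ) be the unique positive solution of γa = τ_ε/(τ_ε + τ₀ + β²a²(θ+1)²τ_S). Then the loading on private information α(θ) := a(θ)(θ+1) is strictly increasing in θ. -/
/-!
Writing α = a(θ)(θ+1), the fixed-point equation for a(θ) becomes
γ α (τε + τ₀ + β² τS α²) = τε (θ + 1).
The left side is increasing in α ≥ 0 and the right side strictly increasing in θ,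
so α must be strictly increasing in θ.
-/

open Set

lemma monotoneOn_mul_add_mul_sq {γ c k : ℝ} (hγ : 0 ≤ γ) (hc : 0 ≤ c) (hk : 0 ≤ k) :
    MonotoneOn (fun x => γ * x * (c + k * x ^ 2)) (Ici 0) := by
  intro x hx y hy hxy
  simp only [mem_Ici] at hx hy
  dsimp only
  gcongr

lemma mul_add_mul_sq_loading_eq {γ β τ₀ τε τS A θ : ℝ}
    (hD : τε + τ₀ + β ^ 2 * A ^ 2 * (θ + 1) ^ 2 * τS ≠ 0)
    (h : γ * A = τε / (τε + τ₀ + β ^ 2 * A ^ 2 * (θ + 1) ^ 2 * τS)) :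
    γ * (A * (θ + 1)) * ((τε + τ₀) + β ^ 2 * τS * (A * (θ + 1)) ^ 2) = τε * (θ + 1) := by
  rw [eq_div_iff hD] at h
  linear_combination (θ + 1) * h

theorem alpha_strictMono_general
    (γ β τ₀ τε τS : ℝ)
    (hγ : 0 < γ) (hτ₀ : 0 < τ₀) (hτε : 0 < τε) (hτS : 0 < τS)
    (a : ℝ → ℝ)
    (ha : ∀ θ : ℝ, -1 < θ → 0 < a θ ∧
      γ * a θ = τε / (τε + τ₀ + β ^ 2 * (a θ) ^ 2 * (θ + 1) ^ 2 * τS)) :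
    StrictMonoOn (fun θ => a θ * (θ + 1)) (Set.Ioi (-1 : ℝ)) := by
  have fixedPoint : ∀ θ ∈ Ioi (-1 : ℝ),
      0 ≤ a θ * (θ + 1) ∧
      γ * (a θ * (θ + 1)) * ((τε + τ₀) + β ^ 2 * τS * (a θ * (θ + 1)) ^ 2) = τε * (θ + 1) := by
    intro θ hθ
    obtain ⟨hpos, heq⟩ := ha θ hθ
    have hθ1 : 0 < θ + 1 := by simp only [mem_Ioi] at hθ; linarith
    exact ⟨by positivity, mul_add_mul_sq_loading_eq (by positivity) heq⟩
  intro x hx y hy hxy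
  obtain ⟨hαx, hfx⟩ := fixedPoint x hx
  obtain ⟨hαy, hfy⟩ := fixedPoint y hy
  refine (monotoneOn_mul_add_mul_sq (c := τε + τ₀) (k := β ^ 2 * τS) hγ.le
    (by positivity) (by positivity)).reflect_lt hαx hαy ?_
  dsimp only
  rw [hfx, hfy]
  gcongr

/-- The loading on private information α(θ) = a(θ)(θ+1) is strictly increasing
in θ on (-1, ∞), where a(θ) is the unique positive solution of the fixed-point
equation. -/
theorem alpha_strictMono
    (γ β τ₀ τε τS : ℝ)
    (hγ : 0 < γ) (hβ : 0 < β) (hτ₀ : 0 < τ₀) (hτε : 0 < τε) (hτS : 0 < τS)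
    (a : ℝ → ℝ)
    (ha : ∀ θ : ℝ, -1 < θ → 0 < a θ ∧
      γ * a θ = τε / (τε + τ₀ + β ^ 2 * (a θ) ^ 2 * (θ + 1) ^ 2 * τS)) :
    StrictMonoOn (fun θ => a θ * (θ + 1)) (Set.Ioi (-1 : ℝ)) :=
  alpha_strictMono_general γ β τ₀ τε τS hγ hτ₀ hτε hτS a ha
end

section
/- With a(θ) the unique positive solution of γa = τ_ε/(τ_ε + τ₀ + β²a²(θ+1)²τ_S), the price variance Var(p) = (1/(γ+β)²)(β²(θ+1)²/τ₀ + 1/(a(θ)²τ_S)) is strictly increasing in θ on (-1,∞). -/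
open Set

/-! The fixed-point equation forces `a` to be antitone: if `a` grew with `θ`, then so would
`a θ * (θ + 1)`, hence the denominator on the right, so the right-hand side would shrink while
the left-hand side `γ * a θ` grows. Therefore `1 / (a θ ^ 2 * τS)` is monotone, and the price
variance is this monotone term plus the strictly increasing term `β ^ 2 * (θ + 1) ^ 2 / τ₀`. -/

lemma le_of_mul_eq_div_of_le {γ τ c₀ c₁ a b k l : ℝ} (hγ : 0 < γ) (hτ : 0 ≤ τ)
    (hc₀ : 0 < c₀) (hc₁ : 0 ≤ c₁) (ha : 0 < a) (hk : 0 ≤ k) (hkl : k ≤ l)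
    (hak : γ * a = τ / (c₀ + c₁ * a ^ 2 * k ^ 2))
    (hbl : γ * b = τ / (c₀ + c₁ * b ^ 2 * l ^ 2)) :
    b ≤ a := by
  by_contra! hab
  have hb : 0 ≤ b := (ha.trans hab).le
  have hsq : a ^ 2 * k ^ 2 ≤ b ^ 2 * l ^ 2 := by
    rw [← mul_pow, ← mul_pow]
    gcongr
  have hden : c₀ + c₁ * a ^ 2 * k ^ 2 ≤ c₀ + c₁ * b ^ 2 * l ^ 2 := by
    simp only [mul_assoc]
    gcongr
  have : γ * b ≤ γ * a := by
    rw [hak, hbl]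
    exact div_le_div_of_nonneg_left hτ (by positivity) hden
  exact hab.not_ge (le_of_mul_le_mul_left this hγ)

lemma antitoneOn_of_mul_eq_div {γ β τ₀ τε τS : ℝ} (hγ : 0 < γ) (hτ₀ : 0 < τ₀) (hτε : 0 < τε)
    (hτS : 0 < τS) {a : ℝ → ℝ}
    (ha : ∀ θ : ℝ, -1 < θ → 0 < a θ ∧
      γ * a θ = τε / (τε + τ₀ + β ^ 2 * (a θ) ^ 2 * (θ + 1) ^ 2 * τS)) :
    AntitoneOn a (Ioi (-1)) := by
  intro x hx y hy hxy
  have hequation (θ : ℝ) (hθ : -1 < θ) :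
      γ * a θ = τε / (τε + τ₀ + β ^ 2 * τS * a θ ^ 2 * (θ + 1) ^ 2) := by
    rw [(ha θ hθ).2]
    ring_nf
  exact le_of_mul_eq_div_of_le hγ hτε.le (by positivity) (by positivity) (ha x hx).1
    (by linarith [mem_Ioi.mp hx]) (by linarith) (hequation x hx) (hequation y hy)

/-- The price variance Var(p) = (1/(γ+β)²)(β²(θ+1)²/τ₀ + 1/(a(θ)²τS)) is
strictly increasing in θ on (-1, ∞). -/
theorem price_variance_strictMono
    (γ β τ₀ τε τS : ℝ)
    (hγ : 0 < γ) (hβ : 0 < β) (hτ₀ : 0 < τ₀) (hτε : 0 < τε) (hτS : 0 < τS)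
    (a : ℝ → ℝ)
    (ha : ∀ θ : ℝ, -1 < θ → 0 < a θ ∧
      γ * a θ = τε / (τε + τ₀ + β ^ 2 * (a θ) ^ 2 * (θ + 1) ^ 2 * τS)) :
    StrictMonoOn
      (fun θ => (1 / (γ + β) ^ 2) * (β ^ 2 * (θ + 1) ^ 2 / τ₀ + 1 / ((a θ) ^ 2 * τS)))
      (Set.Ioi (-1 : ℝ)) := by
  have hfundamental : StrictMonoOn (fun θ : ℝ => β ^ 2 * (θ + 1) ^ 2 / τ₀) (Ioi (-1)) := by
    intro x hx y hy hxy
    have hx1 : 0 ≤ x + 1 := by linarith [mem_Ioi.mp hx]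
    dsimp only
    gcongr
  have hnoise : MonotoneOn (fun θ => 1 / (a θ ^ 2 * τS)) (Ioi (-1)) := by
    intro x hx y hy hxy
    have hay : 0 < a y := (ha y hy).1
    dsimp only
    gcongr
    exact antitoneOn_of_mul_eq_div hγ hτ₀ hτε hτS ha hx hy hxy
  exact (strictMono_mul_left_of_pos (by positivity)).comp_strictMonoOn
    (hfundamental.add_monotone hnoise)
end

section
/- The map θ ↦ (θ+1)/γ - α(θ), the equilibrium loading on public information, is strictly increasing on (-1,∞), tends to 0 as θ → -1⁺ and to ∞ as θ → ∞; hence for any target value η^T > 0 there is a unique θ'' with (θ''+1)/γ - α(θ'') = η^T. -/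
/-!
With `s = θ + 1`, the fixed-point equation reads `γ a (c + d a² s²) = k` with `c = τε + τ₀`,
`d = β² τS`, `k = τε`. Its left side increases in `a` and in `s`, so `a` is strictly decreasing
in `θ`, and `γ a c ≤ k` gives `γ a < 1`. Hence `η = s (1 - γ a) / γ` is a product of two
positive increasing factors: it is squeezed between `0` and `s / γ` as `s → 0⁺`, and grows at
least like `s (1 - γ a(0)) / γ`. Any level `η > 0` is attained by solving the cubic along the
curve `s = γη / (1 - γx)`; uniqueness of its positive root identifies `x` with `a`.
-/

open Set Filter Topology

section LoadingCubic

variable {γ c d k : ℝ}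

theorem cubic_strictMonoOn (hγ : 0 < γ) (hc : 0 < c) (hd : 0 ≤ d) (s : ℝ) :
    StrictMonoOn (fun x => γ * x * (c + d * x ^ 2 * s ^ 2)) (Ici 0) := by
  intro x hx y hy hxy
  simp only [mem_Ici] at hx hy
  have : 0 < c + d * x ^ 2 * s ^ 2 := by positivity
  calc γ * x * (c + d * x ^ 2 * s ^ 2) < γ * y * (c + d * x ^ 2 * s ^ 2) := by gcongr
    _ ≤ γ * y * (c + d * y ^ 2 * s ^ 2) := by gcongr

/-- Along the curve `s = γη / (1 - γx)`, on which `s (1 - γx) / γ = η`, the cubic reaches the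
level `k` by the intermediate value theorem; this sidesteps any continuity of the equilibrium
`a`. -/
theorem exists_cubic_eq_on_level_curve (hγ : 0 < γ) (hd : 0 ≤ d) (hk : 0 < k) (hkc : k < c)
    {η : ℝ} (hη : 0 < η) :
    ∃ x, 0 < x ∧ γ * x < 1 ∧ γ * x * (c + d * x ^ 2 * (γ * η / (1 - γ * x)) ^ 2) = k := by
  set f := fun x => γ * x * (c + d * x ^ 2 * (γ * η / (1 - γ * x)) ^ 2)
  have hc : 0 < c := hk.trans hkc
  set x₁ := k / (γ * c)
  have hx₁ : γ * x₁ * c = k := by simp only [x₁]; field_simp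
  have hγx₁ : γ * x₁ < 1 := by nlinarith
  have hx₁_pos : 0 < x₁ := by positivity
  have hcont : ContinuousOn f (Icc 0 x₁) := by
    have : ∀ x ∈ Icc 0 x₁, 1 - γ * x ≠ 0 := fun x hx => by nlinarith [hx.2]
    fun_prop (disch := assumption)
  have hf₀ : f 0 = 0 := by simp [f]
  have hf₁ : k ≤ f x₁ := by
    have : 0 ≤ γ * x₁ * (d * x₁ ^ 2 * (γ * η / (1 - γ * x₁)) ^ 2) := by positivity
    simp only [f]; nlinarith
  obtain ⟨x, ⟨hx0, hxx₁⟩, hfx⟩ :=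
    intermediate_value_Icc hx₁_pos.le hcont ⟨hf₀.symm ▸ hk.le, hf₁⟩
  have hx : 0 < x := lt_of_le_of_ne hx0 (by rintro rfl; rw [hf₀] at hfx; exact hk.ne hfx)
  exact ⟨x, hx, by nlinarith, hfx⟩

variable {a : ℝ → ℝ}

def SolvesLoadingCubic (γ c d k : ℝ) (a : ℝ → ℝ) : Prop :=
  ∀ θ, -1 < θ → 0 < a θ ∧ γ * a θ * (c + d * a θ ^ 2 * (θ + 1) ^ 2) = k

theorem SolvesLoadingCubic.strictAntiOn (hγ : 0 < γ) (hc : 0 ≤ c) (hd : 0 < d)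
    (ha : SolvesLoadingCubic γ c d k a) : StrictAntiOn a (Ioi (-1)) := by
  intro θ₁ h₁ θ₂ h₂ h₁₂
  simp only [mem_Ioi] at h₁ h₂
  obtain ⟨ha₁, hk₁⟩ := ha θ₁ h₁
  obtain ⟨ha₂, hk₂⟩ := ha θ₂ h₂
  by_contra! hle
  have : (θ₁ + 1) ^ 2 < (θ₂ + 1) ^ 2 := by gcongr; linarith
  exact lt_irrefl k <| calc
    k = γ * a θ₁ * (c + d * a θ₁ ^ 2 * (θ₁ + 1) ^ 2) := hk₁.symm
    _ < γ * a θ₁ * (c + d * a θ₁ ^ 2 * (θ₂ + 1) ^ 2) := by gcongr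
    _ ≤ γ * a θ₂ * (c + d * a θ₂ ^ 2 * (θ₂ + 1) ^ 2) := by gcongr
    _ = k := hk₂

theorem SolvesLoadingCubic.mul_lt_one (hγ : 0 < γ) (hc : 0 ≤ c) (hd : 0 ≤ d) (hkc : k < c)
    (ha : SolvesLoadingCubic γ c d k a) {θ : ℝ} (hθ : -1 < θ) : γ * a θ < 1 := by
  obtain ⟨hpos, hk⟩ := ha θ hθ
  have : 0 ≤ γ * a θ * (d * a θ ^ 2 * (θ + 1) ^ 2) := by positivity
  by_contra! h
  nlinarith [mul_nonneg (sub_nonneg.2 h) hc]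

noncomputable def publicLoading (γ : ℝ) (a : ℝ → ℝ) (θ : ℝ) : ℝ := (θ + 1) / γ - a θ * (θ + 1)

theorem publicLoading_eq (hγ : γ ≠ 0) (θ : ℝ) :
    publicLoading γ a θ = (θ + 1) * (1 - γ * a θ) / γ := by
  rw [publicLoading]; field_simp

theorem SolvesLoadingCubic.strictMonoOn_publicLoading (hγ : 0 < γ) (hc : 0 ≤ c) (hd : 0 < d)
    (hkc : k < c) (ha : SolvesLoadingCubic γ c d k a) :
    StrictMonoOn (publicLoading γ a) (Ioi (-1)) := by
  intro θ₁ h₁ θ₂ h₂ h₁₂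
  have hlt : a θ₂ < a θ₁ := ha.strictAntiOn hγ hc hd h₁ h₂ h₁₂
  have hlt₁ := ha.mul_lt_one hγ hc hd.le hkc h₁
  simp only [mem_Ioi] at h₁
  rw [publicLoading_eq hγ.ne', publicLoading_eq hγ.ne']
  gcongr ?_ / γ
  calc (θ₁ + 1) * (1 - γ * a θ₁) < (θ₂ + 1) * (1 - γ * a θ₁) := by gcongr
    _ < (θ₂ + 1) * (1 - γ * a θ₂) := by gcongr; linarith

theorem SolvesLoadingCubic.tendsto_publicLoading_nhdsGT (hγ : 0 < γ) (hc : 0 ≤ c) (hd : 0 ≤ d)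
    (hkc : k < c) (ha : SolvesLoadingCubic γ c d k a) :
    Tendsto (publicLoading γ a) (𝓝[>] (-1)) (𝓝 0) := by
  have hupper : Tendsto (fun θ : ℝ => (θ + 1) / γ) (𝓝[>] (-1)) (𝓝 0) := by
    have : Tendsto (fun θ : ℝ => (θ + 1) / γ) (𝓝 (-1)) (𝓝 ((-1 + 1) / γ)) :=
      (continuous_add_const 1 |>.div_const γ).tendsto _
    simpa using this.mono_left nhdsWithin_le_nhds
  refine tendsto_of_tendsto_of_tendsto_of_le_of_le' tendsto_const_nhds hupper ?_ ?_
  all_goals filter_upwards [self_mem_nhdsWithin] with θ (hθ : -1 < θ)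
  · have := ha.mul_lt_one hγ hc hd hkc hθ
    rw [publicLoading_eq hγ.ne']
    exact div_nonneg (mul_nonneg (by linarith) (by linarith)) hγ.le
  · have : 0 ≤ a θ * (θ + 1) := mul_nonneg (ha θ hθ).1.le (by linarith)
    rw [publicLoading]; linarith

theorem SolvesLoadingCubic.tendsto_publicLoading_atTop (hγ : 0 < γ) (hc : 0 ≤ c) (hd : 0 < d)
    (hkc : k < c) (ha : SolvesLoadingCubic γ c d k a) :
    Tendsto (publicLoading γ a) atTop atTop := by
  have hslope : 0 < (1 - γ * a 0) / γ :=
    div_pos (by linarith [ha.mul_lt_one hγ hc hd.le hkc (θ := 0) (by norm_num)]) hγ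
  refine tendsto_atTop_mono' atTop ?_
    ((tendsto_atTop_add_const_right atTop 1 tendsto_id).const_mul_atTop hslope)
  filter_upwards [eventually_ge_atTop 0] with θ hθ
  have : a θ ≤ a 0 := ha.strictAntiOn hγ hc hd |>.antitoneOn (by norm_num : (-1 : ℝ) < 0)
    (by simp only [mem_Ioi]; linarith) hθ
  rw [publicLoading_eq hγ.ne', id, div_mul_eq_mul_div, mul_comm]
  gcongr

theorem SolvesLoadingCubic.exists_publicLoading_eq (hγ : 0 < γ) (hd : 0 ≤ d)
    (hk : 0 < k) (hkc : k < c) (ha : SolvesLoadingCubic γ c d k a) {η : ℝ} (hη : 0 < η) :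
    ∃ θ, -1 < θ ∧ publicLoading γ a θ = η := by
  obtain ⟨x, hx, hγx, hcubic⟩ := exists_cubic_eq_on_level_curve hγ hd hk hkc hη
  have hs : 0 < γ * η / (1 - γ * x) := div_pos (by positivity) (by linarith)
  have hθ : -1 < γ * η / (1 - γ * x) - 1 := by linarith
  have hax : a (γ * η / (1 - γ * x) - 1) = x := by
    obtain ⟨hpos, heq⟩ := ha _ hθ
    rw [sub_add_cancel] at heq
    exact (cubic_strictMonoOn hγ (hk.trans hkc) hd _).injOn (mem_Ici.2 hpos.le) (mem_Ici.2 hx.le)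
      (heq.trans hcubic.symm)
  refine ⟨_, hθ, ?_⟩
  rw [publicLoading_eq hγ.ne', hax, sub_add_cancel]
  field_simp [(by linarith : 1 - γ * x ≠ 0)]

end LoadingCubic

theorem solvesLoadingCubic_of_fixedPoint {γ β τ₀ τε τS : ℝ} (hτ₀ : 0 < τ₀) (hτε : 0 < τε)
    (hτS : 0 < τS) {a : ℝ → ℝ}
    (ha : ∀ θ : ℝ, -1 < θ → 0 < a θ ∧
      γ * a θ = τε / (τε + τ₀ + β ^ 2 * (a θ) ^ 2 * (θ + 1) ^ 2 * τS)) :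
    SolvesLoadingCubic γ (τε + τ₀) (β ^ 2 * τS) τε a := by
  intro θ hθ
  obtain ⟨hpos, heq⟩ := ha θ hθ
  refine ⟨hpos, ?_⟩
  rw [eq_div_iff (by positivity)] at heq
  linear_combination heq

/-- The equilibrium loading on public information η(θ) = (θ+1)/γ - α(θ) is strictly
increasing on (-1,∞), tends to 0 as θ → -1⁺ and to ∞ as θ → ∞; hence for any ηᵀ > 0
there is a unique θ'' with η(θ'') = ηᵀ. -/
theorem public_loading_properties
    (γ β τ₀ τε τS : ℝ)
    (hγ : 0 < γ) (hβ : 0 < β) (hτ₀ : 0 < τ₀) (hτε : 0 < τε) (hτS : 0 < τS)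
    (a : ℝ → ℝ)
    (ha : ∀ θ : ℝ, -1 < θ → 0 < a θ ∧
      γ * a θ = τε / (τε + τ₀ + β ^ 2 * (a θ) ^ 2 * (θ + 1) ^ 2 * τS)) :
    StrictMonoOn (fun θ => (θ + 1) / γ - a θ * (θ + 1)) (Set.Ioi (-1 : ℝ)) ∧
    Tendsto (fun θ => (θ + 1) / γ - a θ * (θ + 1)) (𝓝[>] (-1 : ℝ)) (𝓝 0) ∧
    Tendsto (fun θ => (θ + 1) / γ - a θ * (θ + 1)) atTop atTop ∧
    ∀ ηT : ℝ, 0 < ηT →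
      ∃! θ : ℝ, θ ∈ Set.Ioi (-1 : ℝ) ∧ (θ + 1) / γ - a θ * (θ + 1) = ηT := by
  have hcubic := solvesLoadingCubic_of_fixedPoint hτ₀ hτε hτS ha
  have hc : 0 < τε + τ₀ := by positivity
  have hd : 0 < β ^ 2 * τS := by positivity
  have hkc : τε < τε + τ₀ := by linarith
  have hmono := hcubic.strictMonoOn_publicLoading hγ hc.le hd hkc
  refine ⟨hmono, hcubic.tendsto_publicLoading_nhdsGT hγ hc.le hd.le hkc,
    hcubic.tendsto_publicLoading_atTop hγ hc.le hd hkc, fun ηT hηT => ?_⟩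
  obtain ⟨θ, hθ, hθη⟩ := hcubic.exists_publicLoading_eq hγ hd.le hτε hkc hηT
  exact ⟨θ, ⟨hθ, hθη⟩, fun θ' ⟨hθ', hθ'η⟩ => hmono.injOn hθ' hθ (hθ'η.trans hθη.symm)⟩
end

section
/- Fix θ > -1 and parameters γ, β, τ₀, τ_ε, τ_S > 0. For δ > -γ with β + δ > 0, let a(δ) be the unique positive solution of (γ+δ)a = τ_ε/(τ_ε + τ₀ + a²(θ+1)²(β+δ)²τ_S), and set α(δ) = a(δ)(θ+1). Then dα/dδ = -α·(α²(β+δ)τ_S(β + 2(γ+δ) + δ) + τ₀ + τ_ε)/((γ+δ)(3α²(β+δ)²τ_S + τ₀ + τ_ε)) < 0, so α is strictly decreasing in the tax δ. -/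
/-!
Substituting `y = (β + δ) a` turns the equilibrium condition
`(γ + δ) (c a + k (β + δ)² a³) = τε`, with `c = τ₀ + τε` and `k = (θ + 1)² τS`, into
`c y + k y³ = τε (β + δ) / (γ + δ)`. The left side is a fixed increasing cubic, so `y`, and with
it `a`, is differentiable by the inverse function theorem. Differentiating the equilibrium
condition implicitly then gives the derivative, whose sign is read off since every factor is
positive.
-/

open Set Filter Topology

theorem StrictMono.hasDerivAt_of_comp_eventuallyEq {f y r : ℝ → ℝ} {f' r' x : ℝ}
    (hf : StrictMono f) (hsurj : Function.Surjective f) (hf' : HasDerivAt f f' (y x))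
    (hf'0 : f' ≠ 0) (hr : HasDerivAt r r' x) (hyr : ∀ᶠ z in 𝓝 x, f (y z) = r z) :
    HasDerivAt y (r' / f') x := by
  set e := hf.orderIsoOfSurjective f hsurj
  have hy : e.symm ∘ r =ᶠ[𝓝 x] y := hyr.mono fun z hz => by
    simp only [Function.comp_apply, ← hz, e, hf.orderIsoOfSurjective_symm_apply_self]
  have hinv : HasDerivAt e.symm f'⁻¹ (r x) := by
    refine .of_local_left_inverse e.symm.continuous.continuousAt ?_ hf'0
      (.of_forall e.apply_symm_apply)
    rwa [← hyr.self_of_nhds, hf.orderIsoOfSurjective_symm_apply_self]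
  rw [div_eq_inv_mul]
  exact (hinv.comp x hr).congr_of_eventuallyEq hy.symm

section Cubic

variable {c k : ℝ}

theorem strictMono_linear_add_cubic (hc : 0 < c) (hk : 0 ≤ k) :
    StrictMono fun y : ℝ => c * y + k * y ^ 3 :=
  (strictMono_mul_left_of_pos hc).add_monotone
    ((Odd.strictMono_pow (by decide)).monotone.const_mul hk)

theorem surjective_linear_add_cubic (hc : 0 < c) (hk : 0 ≤ k) :
    Function.Surjective fun y : ℝ => c * y + k * y ^ 3 := by
  intro r
  have hcr : c * (|r| / c) = |r| := mul_div_cancel₀ _ hc.ne'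
  have hk3 : 0 ≤ k * (|r| / c) ^ 3 := by positivity
  refine mem_range_of_exists_le_of_exists_ge (by fun_prop) ⟨-(|r| / c), ?_⟩ ⟨|r| / c, ?_⟩
  · linear_combination hk3 + neg_abs_le r - hcr
  · linarith [le_abs_self r]

theorem hasDerivAt_linear_add_cubic (y : ℝ) :
    HasDerivAt (fun y : ℝ => c * y + k * y ^ 3) (c + 3 * k * y ^ 2) y :=
  ((hasDerivAt_const_mul c).fun_add ((hasDerivAt_pow 3 y).const_mul k)).congr_deriv (by ring)

end Cubic

section Equilibrium

variable {c k t γ β δ : ℝ} {a : ℝ → ℝ}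

theorem differentiableAt_of_equilibrium (hc : 0 < c) (hk : 0 ≤ k) (hG : γ + δ ≠ 0)
    (hB : β + δ ≠ 0)
    (heq : ∀ᶠ d in 𝓝 δ, (γ + d) * (c * a d + k * (β + d) ^ 2 * a d ^ 3) = t) :
    DifferentiableAt ℝ a δ := by
  have hG' : ∀ᶠ d in 𝓝 δ, γ + d ≠ 0 :=
    (continuous_const.add continuous_id).continuousAt.eventually_ne hG
  have hB' : ∀ᶠ d in 𝓝 δ, β + d ≠ 0 :=
    (continuous_const.add continuous_id).continuousAt.eventually_ne hB
  have hy : DifferentiableAt ℝ (fun d => (β + d) * a d) δ :=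
    ((strictMono_linear_add_cubic hc hk).hasDerivAt_of_comp_eventuallyEq
      (surjective_linear_add_cubic hc hk) (hasDerivAt_linear_add_cubic _) (by positivity)
      (r := fun d => t * (β + d) / (γ + d))
      ((by fun_prop (disch := exact hG) : DifferentiableAt ℝ _ δ).hasDerivAt)
      ((heq.and hG').mono fun d ⟨h, hd⟩ => by
        field_simp
        linear_combination (β + d) * h)).differentiableAt
  have ha : (fun d => (β + d) * a d / (β + d)) =ᶠ[𝓝 δ] a :=
    hB'.mono fun d hd => mul_div_cancel_left₀ _ hd
  exact (hy.div (by fun_prop) hB).congr_of_eventuallyEq ha.symm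

theorem equilibrium_deriv_mul_eq {a' : ℝ} (ha : HasDerivAt a a' δ)
    (heq : ∀ᶠ d in 𝓝 δ, (γ + d) * (c * a d + k * (β + d) ^ 2 * a d ^ 3) = t) :
    (γ + δ) * (c + 3 * k * (β + δ) ^ 2 * a δ ^ 2) * a' =
      -(a δ * (c + k * (β + δ) * (β + 2 * (γ + δ) + δ) * a δ ^ 2)) := by
  have hF := ((hasDerivAt_id' δ).const_add γ).fun_mul ((ha.const_mul c).fun_add
    ((((hasDerivAt_id' δ).const_add β).fun_pow 2).const_mul k |>.fun_mul (ha.fun_pow 3)))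
  have h0 := hF.unique ((hasDerivAt_const δ t).congr_of_eventuallyEq heq)
  linear_combination h0

end Equilibrium

noncomputable def loadingSlope (γ β τ₀ τε τS α δ : ℝ) : ℝ :=
  -(α * (α ^ 2 * (β + δ) * τS * (β + 2 * (γ + δ) + δ) + τ₀ + τε) /
    ((γ + δ) * (3 * α ^ 2 * (β + δ) ^ 2 * τS + τ₀ + τε)))

section Loading

variable {γ β τ₀ τε τS θ δ : ℝ}

theorem loadingSlope_neg {α : ℝ} (hα : 0 < α) (hG : 0 < γ + δ) (hB : 0 < β + δ)
    (hτ₀ : 0 ≤ τ₀) (hτε : 0 < τε) (hτS : 0 ≤ τS) : loadingSlope γ β τ₀ τε τS α δ < 0 := by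
  have : 0 < β + 2 * (γ + δ) + δ := by linarith
  rw [loadingSlope, neg_lt_zero]
  positivity

theorem hasDerivAt_loading (hτ₀ : 0 ≤ τ₀) (hτε : 0 < τε) (hτS : 0 ≤ τS) {a : ℝ → ℝ}
    (hG : γ + δ ≠ 0) (hB : β + δ ≠ 0)
    (ha : ∀ᶠ d in 𝓝 δ,
      (γ + d) * a d = τε / (τε + τ₀ + a d ^ 2 * (θ + 1) ^ 2 * (β + d) ^ 2 * τS)) :
    HasDerivAt (fun d => a d * (θ + 1)) (loadingSlope γ β τ₀ τε τS (a δ * (θ + 1)) δ) δ := by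
  have hcubic : ∀ᶠ d in 𝓝 δ,
      (γ + d) * ((τ₀ + τε) * a d + (θ + 1) ^ 2 * τS * (β + d) ^ 2 * a d ^ 3) = τε :=
    ha.mono fun d hd => by
      rw [eq_div_iff (by positivity)] at hd
      linear_combination hd
  have ha' := (differentiableAt_of_equilibrium (by positivity) (by positivity) hG hB
    hcubic).hasDerivAt
  have hd := equilibrium_deriv_mul_eq ha' hcubic
  refine (ha'.mul_const (θ + 1)).congr_deriv ?_
  rw [loadingSlope, neg_div', eq_div_iff (mul_ne_zero hG (by positivity))]
  linear_combination (θ + 1) * hd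

end Loading

theorem taxed_loading_decreasing_general
    (γ β τ₀ τε τS θ : ℝ)
    (hτ₀ : 0 < τ₀) (hτε : 0 < τε) (hτS : 0 < τS)
    (hθ : -1 < θ)
    (a : ℝ → ℝ)
    (ha : ∀ δ : ℝ, -γ < δ → 0 < β + δ → 0 < a δ ∧
      (γ + δ) * a δ = τε / (τε + τ₀ + (a δ) ^ 2 * (θ + 1) ^ 2 * (β + δ) ^ 2 * τS)) :
    (∀ δ : ℝ, -γ < δ → 0 < β + δ →
      HasDerivAt (fun d => a d * (θ + 1))
        (-(a δ * (θ + 1) *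
            ((a δ * (θ + 1)) ^ 2 * (β + δ) * τS * (β + 2 * (γ + δ) + δ) + τ₀ + τε) /
          ((γ + δ) * (3 * (a δ * (θ + 1)) ^ 2 * (β + δ) ^ 2 * τS + τ₀ + τε)))) δ ∧
      -(a δ * (θ + 1) *
            ((a δ * (θ + 1)) ^ 2 * (β + δ) * τS * (β + 2 * (γ + δ) + δ) + τ₀ + τε) /
          ((γ + δ) * (3 * (a δ * (θ + 1)) ^ 2 * (β + δ) ^ 2 * τS + τ₀ + τε))) < 0) ∧
    StrictAntiOn (fun δ => a δ * (θ + 1)) {δ : ℝ | -γ < δ ∧ 0 < β + δ} := by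
  set S := {δ : ℝ | -γ < δ ∧ 0 < β + δ}
  have hS : S = Ioi (-γ) ∩ Ioi (-β) := by
    ext δ
    simp [S, neg_lt_iff_pos_add']
  have hSopen : IsOpen S := hS ▸ isOpen_Ioi.inter isOpen_Ioi
  have hG : ∀ δ ∈ S, 0 < γ + δ := fun δ hδ => neg_lt_iff_pos_add'.mp hδ.1
  have hderiv : ∀ δ ∈ S, HasDerivAt (fun d => a d * (θ + 1))
      (loadingSlope γ β τ₀ τε τS (a δ * (θ + 1)) δ) δ := fun δ hδ =>
    hasDerivAt_loading hτ₀.le hτε hτS.le (hG δ hδ).ne' hδ.2.ne'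
      (eventually_of_mem (hSopen.mem_nhds hδ) fun d hd => (ha d hd.1 hd.2).2)
  have hneg : ∀ δ ∈ S, loadingSlope γ β τ₀ τε τS (a δ * (θ + 1)) δ < 0 := fun δ hδ =>
    loadingSlope_neg (mul_pos (ha δ hδ.1 hδ.2).1 (neg_lt_iff_pos_add.mp hθ)) (hG δ hδ) hδ.2
      hτ₀.le hτε hτS.le
  refine ⟨fun δ h1 h2 => ⟨hderiv δ ⟨h1, h2⟩, hneg δ ⟨h1, h2⟩⟩, ?_⟩
  refine strictAntiOn_of_hasDerivWithinAt_neg (hS ▸ (convex_Ioi _).inter (convex_Ioi _))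
    (f' := fun δ => loadingSlope γ β τ₀ τε τS (a δ * (θ + 1)) δ)
    (fun δ hδ => (hderiv δ hδ).continuousAt.continuousWithinAt) ?_ ?_ <;>
    rw [hSopen.interior_eq]
  · exact fun δ hδ => (hderiv δ hδ).hasDerivWithinAt
  · exact hneg

/-- In the taxed equilibrium (tax δ on all traders), the loading on private
information α(δ) = a(δ)(θ+1) has the stated negative derivative in δ, so α is
strictly decreasing in the tax. -/
theorem taxed_loading_decreasing
    (γ β τ₀ τε τS θ : ℝ)
    (hγ : 0 < γ) (hβ : 0 < β) (hτ₀ : 0 < τ₀) (hτε : 0 < τε) (hτS : 0 < τS)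
    (hθ : -1 < θ)
    (a : ℝ → ℝ)
    (ha : ∀ δ : ℝ, -γ < δ → 0 < β + δ → 0 < a δ ∧
      (γ + δ) * a δ = τε / (τε + τ₀ + (a δ) ^ 2 * (θ + 1) ^ 2 * (β + δ) ^ 2 * τS)) :
    (∀ δ : ℝ, -γ < δ → 0 < β + δ →
      HasDerivAt (fun d => a d * (θ + 1))
        (-(a δ * (θ + 1) *
            ((a δ * (θ + 1)) ^ 2 * (β + δ) * τS * (β + 2 * (γ + δ) + δ) + τ₀ + τε) /
          ((γ + δ) * (3 * (a δ * (θ + 1)) ^ 2 * (β + δ) ^ 2 * τS + τ₀ + τε)))) δ ∧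
      -(a δ * (θ + 1) *
            ((a δ * (θ + 1)) ^ 2 * (β + δ) * τS * (β + 2 * (γ + δ) + δ) + τ₀ + τε) /
          ((γ + δ) * (3 * (a δ * (θ + 1)) ^ 2 * (β + δ) ^ 2 * τS + τ₀ + τε))) < 0) ∧
    StrictAntiOn (fun δ => a δ * (θ + 1)) {δ : ℝ | -γ < δ ∧ 0 < β + δ} :=
  taxed_loading_decreasing_general γ β τ₀ τε τS θ hτ₀ hτε hτS hθ a ha
end

section
/- In the taxed equilibrium where the tax affects only informed traders, the loading on public information η(δ) = (θ+1)/(γ+δ) - α(δ) is strictly decreasing in δ, where α(δ) = a(δ)(θ+1) and a(δ) solves (γ+δ)a = τ_ε/(τ_ε + τ₀ + a²(θ+1)²β²τ_S). -/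
open Set

/-!
Write `c = (θ+1)²β²τS` and `x = γ + δ`. The equilibrium condition reads `x · a(τε + τ₀ + c a²) = τε`.
Since `a ↦ a(τε + τ₀ + c a²)` is strictly increasing on `a ≥ 0`, a larger tax `δ` forces a smaller
`a(δ)`. Substituting `1/x = a(τε + τ₀ + c a²)/τε` turns the loading into
`η = (θ+1) · a(τ₀ + c a²) / τε`, which is again strictly increasing in `a`, hence decreasing in `δ`.
-/

lemma strictMonoOn_mul_add_mul_sq {s c : ℝ} (hs : 0 < s) (hc : 0 ≤ c) :
    StrictMonoOn (fun a : ℝ => a * (s + c * a ^ 2)) (Ici 0) := by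
  intro x hx y hy hxy
  simp only [mem_Ici] at hx hy
  have hsq : 0 ≤ c * (y ^ 2 + x * y + x ^ 2) := by positivity
  nlinarith [mul_pos (sub_pos.mpr hxy) (add_pos_of_pos_of_nonneg hs hsq)]

lemma StrictMonoOn.lt_of_mul_eq_of_mul_eq {g : ℝ → ℝ} {S : Set ℝ} (hg : StrictMonoOn g S)
    {x₁ x₂ a₁ a₂ k : ℝ} (ha₁ : a₁ ∈ S) (ha₂ : a₂ ∈ S) (hk : 0 < k) (hx₁ : 0 < x₁)
    (hx : x₁ < x₂) (h₁ : x₁ * g a₁ = k) (h₂ : x₂ * g a₂ = k) : a₂ < a₁ := by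
  have hg₁ : g a₁ = k / x₁ := by rw [← h₁, mul_div_cancel_left₀ _ hx₁.ne']
  have hg₂ : g a₂ = k / x₂ := by rw [← h₂, mul_div_cancel_left₀ _ (hx₁.trans hx).ne']
  refine (hg.lt_iff_lt ha₂ ha₁).mp ?_
  rw [hg₁, hg₂]
  exact div_lt_div_of_pos_left hk hx₁ hx

lemma div_sub_mul_eq_of_mul_mul_eq {x a m e s c : ℝ} (hx : x ≠ 0) (he : e ≠ 0)
    (h : x * (a * (e + s + c * a ^ 2)) = e) :
    m / x - a * m = m * (a * (s + c * a ^ 2)) / e := by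
  field_simp
  linear_combination (-m) * h

theorem public_loading_decreasing_in_tax_general
    (γ β τ₀ τε τS θ : ℝ)
    (hτ₀ : 0 < τ₀) (hτε : 0 < τε) (hτS : 0 < τS)
    (hθ : -1 < θ)
    (a : ℝ → ℝ)
    (ha : ∀ δ : ℝ, -γ < δ → 0 < a δ ∧
      (γ + δ) * a δ = τε / (τε + τ₀ + (a δ) ^ 2 * (θ + 1) ^ 2 * β ^ 2 * τS)) :
    StrictAntiOn (fun δ => (θ + 1) / (γ + δ) - a δ * (θ + 1)) (Set.Ioi (-γ)) := by
  obtain ⟨c, hc_def⟩ : ∃ c, c = (θ + 1) ^ 2 * β ^ 2 * τS := ⟨_, rfl⟩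
  have hc : 0 ≤ c := hc_def ▸ by positivity
  have equilibrium : ∀ δ ∈ Ioi (-γ),
      0 < a δ ∧ (γ + δ) * (a δ * (τε + τ₀ + c * a δ ^ 2)) = τε := by
    intro δ hδ
    obtain ⟨hpos, heq⟩ := ha δ hδ
    rw [eq_div_iff (by positivity)] at heq
    exact ⟨hpos, by rw [hc_def]; linear_combination heq⟩
  intro δ₁ h₁ δ₂ h₂ hlt
  obtain ⟨hpos₁, heq₁⟩ := equilibrium δ₁ h₁
  obtain ⟨hpos₂, heq₂⟩ := equilibrium δ₂ h₂
  rw [mem_Ioi] at h₁ h₂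
  have hx₁ : 0 < γ + δ₁ := by linarith
  have ha_lt : a δ₂ < a δ₁ :=
    (strictMonoOn_mul_add_mul_sq (by positivity) hc).lt_of_mul_eq_of_mul_eq
      hpos₁.le hpos₂.le hτε hx₁ (by linarith) heq₁ heq₂
  simp only [div_sub_mul_eq_of_mul_mul_eq hx₁.ne' hτε.ne' heq₁,
    div_sub_mul_eq_of_mul_mul_eq (by linarith : γ + δ₂ ≠ 0) hτε.ne' heq₂]
  have hloading := strictMonoOn_mul_add_mul_sq hτ₀ hc hpos₂.le hpos₁.le ha_lt
  exact div_lt_div_of_pos_right (mul_lt_mul_of_pos_left hloading (by linarith)) hτε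

/-- When the tax affects only informed traders (so the supply slope β and public
precision are unchanged), the loading on public information
η(δ) = (θ+1)/(γ+δ) - α(δ) is strictly decreasing in δ. -/
theorem public_loading_decreasing_in_tax
    (γ β τ₀ τε τS θ : ℝ)
    (hγ : 0 < γ) (hβ : 0 < β) (hτ₀ : 0 < τ₀) (hτε : 0 < τε) (hτS : 0 < τS)
    (hθ : -1 < θ)
    (a : ℝ → ℝ)
    (ha : ∀ δ : ℝ, -γ < δ → 0 < a δ ∧
      (γ + δ) * a δ = τε / (τε + τ₀ + (a δ) ^ 2 * (θ + 1) ^ 2 * β ^ 2 * τS)) :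
    StrictAntiOn (fun δ => (θ + 1) / (γ + δ) - a δ * (θ + 1)) (Set.Ioi (-γ)) :=
  public_loading_decreasing_in_tax_general γ β τ₀ τε τS θ hτ₀ hτε hτS hθ a ha
end
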